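/- arXiv:math/0301023 — 3 statements merged into one kernel-verified Lean document; each statement's English description precedes it below -/
import Mathlib

section
/- Let p be an odd prime. For all x, y ∈ ℚ_p, one has |x| < |y| if and only if y² + x²/p is a nonzero square in ℚ_p. -/
/-!
If `‖x‖ < ‖y‖`, then `y ^ 2 + x ^ 2 / p = y ^ 2 * (1 + (x / y) ^ 2 / p)` and the correction term
has norm `< 1`, so for odd `p` Hensel's lemma makes `1 + (x / y) ^ 2 / p` a square. If instead
`‖y‖ ≤ ‖x‖` with `x ≠ 0`, the term `x ^ 2 / p` dominates and the sum has norm `p * ‖x‖ ^ 2`, an odd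
power of `p`, whereas the norm of a square is an even one.
-/

open Polynomial

section

variable {p : ℕ} [Fact p.Prime]

theorem PadicInt.exists_sq_eq_one_add (hp : p ≠ 2) {u : ℤ_[p]} (hu : ‖u‖ < 1) :
    ∃ s : ℤ_[p], s ^ 2 = 1 + u := by
  have h2 : ‖(2 : ℤ_[p])‖ = 1 := by
    rw [← Nat.cast_ofNat, PadicInt.norm_natCast_eq_one_iff,
      Nat.coprime_primes Fact.out Nat.prime_two]
    exact hp
  have hF : ‖aeval (1 : ℤ_[p]) (X ^ 2 - C (1 + u))‖ <
      ‖aeval (1 : ℤ_[p]) (derivative (X ^ 2 - C (1 + u)))‖ ^ 2 := by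
    simpa [one_add_one_eq_two, h2] using hu
  obtain ⟨s, hs, -⟩ := hensels_lemma hF
  exact ⟨s, by simpa [sub_eq_zero] using hs⟩

theorem Padic.exists_sq_eq_one_add (hp : p ≠ 2) {u : ℚ_[p]} (hu : ‖u‖ < 1) :
    ∃ s : ℚ_[p], s ^ 2 = 1 + u := by
  obtain ⟨s, hs⟩ := PadicInt.exists_sq_eq_one_add hp (u := ⟨u, hu.le⟩) hu
  have hs' := congrArg ((↑) : ℤ_[p] → ℚ_[p]) hs
  push_cast at hs'
  exact ⟨s, hs'⟩

theorem Padic.norm_sq_ne_natCast (z : ℚ_[p]) : ‖z‖ ^ 2 ≠ p := by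
  have hp1 : (1 : ℝ) < p := mod_cast (Fact.out : p.Prime).one_lt
  rcases eq_or_ne z 0 with rfl | hz
  · simpa using (Nat.cast_pos.mpr (Fact.out : p.Prime).pos : (0 : ℝ) < p).ne
  · intro h
    rw [Padic.norm_eq_zpow_neg_valuation hz, ← zpow_natCast, ← zpow_mul] at h
    have := zpow_right_injective₀ (zero_lt_one.trans hp1) hp1.ne' (h.trans (zpow_one _).symm)
    omega

theorem Padic.norm_sq_div_p_lt_one {w : ℚ_[p]} (hw : ‖w‖ < 1) : ‖w ^ 2 / p‖ < 1 := by
  have hp1 : (1 : ℝ) < p := mod_cast (Fact.out : p.Prime).one_lt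
  have hw' : ‖w‖ ≤ (p : ℝ)⁻¹ := by
    simpa using (Padic.norm_le_pow_iff_norm_lt_pow_add_one w (-1)).mpr (by simpa using hw)
  rw [norm_div, norm_pow, Padic.norm_p, div_inv_eq_mul]
  calc ‖w‖ ^ 2 * p ≤ (p : ℝ)⁻¹ ^ 2 * p := by gcongr
    _ = (p : ℝ)⁻¹ := by field_simp
    _ < 1 := inv_lt_one_of_one_lt₀ hp1

theorem Padic.norm_sq_add_sq_div_p {x y : ℚ_[p]} (hx : x ≠ 0) (hyx : ‖y‖ ≤ ‖x‖) :
    ‖y ^ 2 + x ^ 2 / p‖ = p * ‖x‖ ^ 2 := by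
  have hp1 : (1 : ℝ) < p := mod_cast (Fact.out : p.Prime).one_lt
  have hxp : ‖x ^ 2 / p‖ = p * ‖x‖ ^ 2 := by
    rw [norm_div, norm_pow, Padic.norm_p, div_inv_eq_mul, mul_comm]
  have hlt : ‖y ^ 2‖ < ‖x ^ 2 / p‖ := by
    rw [hxp, norm_pow]
    calc ‖y‖ ^ 2 ≤ ‖x‖ ^ 2 := by gcongr
      _ < p * ‖x‖ ^ 2 := lt_mul_left (by positivity) hp1
  rw [Padic.add_eq_max_of_ne hlt.ne, max_eq_right hlt.le, hxp]

end

namespace PadicCell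

theorem statement10 (p : ℕ) [Fact p.Prime] (hp : p ≠ 2) (x y : ℚ_[p]) :
    ‖x‖ < ‖y‖ ↔ ∃ z : ℚ_[p], z ≠ 0 ∧ y ^ 2 + x ^ 2 / (p : ℚ_[p]) = z ^ 2 := by
  constructor
  · intro hxy
    have hy : y ≠ 0 := norm_pos_iff.mp ((norm_nonneg x).trans_lt hxy)
    have hu : ‖(x / y) ^ 2 / p‖ < 1 := Padic.norm_sq_div_p_lt_one <| by
      rwa [norm_div, div_lt_one (norm_pos_iff.mpr hy)]
    obtain ⟨s, hs⟩ := Padic.exists_sq_eq_one_add hp hu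
    refine ⟨y * s, mul_ne_zero hy ?_, ?_⟩
    · rintro rfl
      rw [show (x / y) ^ 2 / p = -1 by linear_combination -hs, norm_neg, norm_one] at hu
      exact hu.false
    · rw [mul_pow, hs]
      field_simp
  · rintro ⟨z, hz, hsum⟩
    by_contra! hyx
    rcases eq_or_ne x 0 with rfl | hx
    · obtain rfl : y = 0 := norm_le_zero_iff.mp (by simpa using hyx)
      exact hz (pow_eq_zero_iff two_ne_zero |>.mp (by simpa using hsum.symm))
    · have hnorm := Padic.norm_sq_add_sq_div_p hx hyx
      rw [hsum, norm_pow] at hnorm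
      refine Padic.norm_sq_ne_natCast (z / x) ?_
      rw [norm_div, div_pow, hnorm]
      field_simp [norm_ne_zero_iff.mpr hx]

end PadicCell
end

section
/- Let μ ∈ K^× and n > 0. For k ∈ ℤ let S_k = {t ∈ K : v(t) = k and t ∈ μP_n}. Then S_k is empty unless k ≡ v(μ) mod n, and there is a positive rational number ε (depending only on K, μ and n) such that for every integer k with k ≡ v(μ) mod n, the Haar measure of S_k (normalized so that R has measure 1) equals ε · q^{−k}. -/
open MeasureTheory
open scoped Classical
open FirstOrder

namespace PadicCell

variable (K : Type) [NormedField K]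

/-- `f` is the restricted analytic function associated to a restricted power series over `K`:
a power series whose coefficients tend to `0`, evaluated on the unit polydisc, `0` outside. -/
def IsRestrictedAnalytic {m : ℕ} (f : (Fin m → K) → K) : Prop :=
  ∃ a : (Fin m →₀ ℕ) → K,
    (∀ ε : ℝ, 0 < ε → ∃ N : ℕ, ∀ i : Fin m →₀ ℕ, N ≤ i.sum (fun _ k => k) → ‖a i‖ < ε) ∧
    ∀ x : Fin m → K, f x =
      if ∀ j, ‖x j‖ ≤ 1 then ∑' i : Fin m →₀ ℕ, a i * ∏ j, x j ^ i j else 0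

/-- The algebra `B_K` of basic subanalytic functions: the smallest `K`-algebra of functions
`K^m → K` (all `m`) containing the restricted analytic functions and the rational functions
(extended by `0` where the denominator vanishes), closed under composition. -/
inductive IsBasicSubanalytic : ∀ {m : ℕ}, ((Fin m → K) → K) → Prop
  | restricted {m : ℕ} {f : (Fin m → K) → K} :
      IsRestrictedAnalytic K f → IsBasicSubanalytic f
  | ratfunc {m : ℕ} (f g : MvPolynomial (Fin m) K) :
      IsBasicSubanalytic (fun x =>
        if MvPolynomial.eval x g = 0 then 0 else MvPolynomial.eval x f / MvPolynomial.eval x g)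
  | const {m : ℕ} (c : K) : IsBasicSubanalytic (fun _ : Fin m → K => c)
  | add {m : ℕ} {f g : (Fin m → K) → K} :
      IsBasicSubanalytic f → IsBasicSubanalytic g → IsBasicSubanalytic (fun x => f x + g x)
  | mul {m : ℕ} {f g : (Fin m → K) → K} :
      IsBasicSubanalytic f → IsBasicSubanalytic g → IsBasicSubanalytic (fun x => f x * g x)
  | comp {m n : ℕ} {f : (Fin n → K) → K} {g : Fin n → (Fin m → K) → K} :
      IsBasicSubanalytic f → (∀ i, IsBasicSubanalytic (g i)) →
      IsBasicSubanalytic (fun x => f fun i => g i x)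

/-- `P_n`, the set of `n`-th powers in `K^×`. -/
def Pn (n : ℕ) : Set K := {y | ∃ z : K, z ≠ 0 ∧ y = z ^ n}

/-- The coset `λ·P_n`. -/
def cosetPn (lam : K) (n : ℕ) : Set K := {y | ∃ z ∈ Pn K n, y = lam * z}

/-- A subanalytic subset of `K^m`: a finite union of sets
`{x | f x = 0, g₁ x ∈ P_{n₁}, …, g_k x ∈ P_{n_k}}` with `f`, `gⱼ` basic subanalytic. -/
def IsSubanalytic {m : ℕ} (X : Set (Fin m → K)) : Prop :=
  ∃ (N : ℕ) (piece : Fin N → Set (Fin m → K)),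
    X = (⋃ i, piece i) ∧
    ∀ i, ∃ (f : (Fin m → K) → K) (_ : IsBasicSubanalytic K f)
      (k : ℕ) (g : Fin k → (Fin m → K) → K) (n : Fin k → ℕ),
      (∀ j, IsBasicSubanalytic K (g j) ∧ 0 < n j) ∧
      piece i = {x | f x = 0 ∧ ∀ j, g j x ∈ Pn K (n j)}

/-- A semialgebraic subset of `K^m`. -/
def IsSemialgebraic {m : ℕ} (X : Set (Fin m → K)) : Prop :=
  ∃ (N : ℕ) (piece : Fin N → Set (Fin m → K)),
    X = (⋃ i, piece i) ∧
    ∀ i, ∃ (f : MvPolynomial (Fin m) K) (k : ℕ)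
      (g : Fin k → MvPolynomial (Fin m) K) (n : Fin k → ℕ),
      (∀ j, 0 < n j) ∧
      piece i = {x | MvPolynomial.eval x f = 0 ∧
        ∀ j, MvPolynomial.eval x (g j) ∈ Pn K (n j)}

/-- A function `X → K`, `X ⊆ K^m`, is subanalytic if its graph is a subanalytic subset
of `K^{m+1}`. -/
def IsSubanalyticFunOn {m : ℕ} (X : Set (Fin m → K)) (f : (Fin m → K) → K) : Prop :=
  IsSubanalytic K {y : Fin (m + 1) → K | Fin.init y ∈ X ∧ y (Fin.last m) = f (Fin.init y)}

/-- A (total) subanalytic function `K^m → K`. -/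
def IsSubanalyticFun {m : ℕ} (f : (Fin m → K) → K) : Prop :=
  IsSubanalyticFunOn K Set.univ f

/-- A semialgebraic function on `X ⊆ K^m`. -/
def IsSemialgebraicFunOn {m : ℕ} (X : Set (Fin m → K)) (f : (Fin m → K) → K) : Prop :=
  IsSemialgebraic K {y : Fin (m + 1) → K | Fin.init y ∈ X ∧ y (Fin.last m) = f (Fin.init y)}

/-- A map `X → K^n`, `X ⊆ K^m`, is subanalytic if its graph is a subanalytic subset
of `K^{m+n}`. -/
def IsSubanalyticMapOn {m n : ℕ} (X : Set (Fin m → K)) (F : (Fin m → K) → Fin n → K) : Prop :=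
  IsSubanalytic K {z : Fin (m + n) → K |
    (fun i => z (Fin.castAdd n i)) ∈ X ∧
    ∀ j, z (Fin.natAdd m j) = F (fun i => z (Fin.castAdd n i)) j}

/-- Cells, relative to an abstract "norm-smaller-than" relation `lt`, coset sets `coset lam n`
(representing `λ·P_n`) and a notion `SubF` of (graphs of) subanalytic functions.
`IsCellGen F lt coset SubF A γ lam n` says that `A ⊆ F^{m+1}` is a cell with center `γ`
and coset `λ·P_n`.  A cell in `F` is a point or a set
`{t | |α| □₁ |t-γ| □₂ |β|, t-γ ∈ λP_n}`; a cell in `F^{m+2}` has a cell `D ⊆ F^{m+1}` as its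
projection and is given by subanalytic data `α, β, γ` on the first `m+1` coordinates. -/
inductive IsCellGen (F : Type) [Field F] (lt : F → F → Prop) (coset : F → ℕ → Set F)
    (SubF : ∀ m : ℕ, ((Fin m → F) → F) → Prop) :
    ∀ {m : ℕ}, Set (Fin (m + 1) → F) → ((Fin m → F) → F) → F → ℕ → Prop
  | point (c : F) :
      IsCellGen F lt coset SubF {t : Fin 1 → F | t 0 = c} (fun _ => c) 0 1
  | base (n : ℕ) (hn : 0 < n) (lam γ α β : F) (hα : α ≠ 0) (hβ : β ≠ 0) (b₁ b₂ : Bool) :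
      IsCellGen F lt coset SubF
        {t : Fin 1 → F | (b₁ = true → lt α (t 0 - γ)) ∧ (b₂ = true → lt (t 0 - γ) β) ∧
          t 0 - γ ∈ coset lam n}
        (fun _ => γ) lam n
  | succ {m : ℕ} {D : Set (Fin (m + 1) → F)} {γD : (Fin m → F) → F} {lamD : F} {nD : ℕ}
      (hD : IsCellGen F lt coset SubF D γD lamD nD)
      (n : ℕ) (hn : 0 < n) (lam : F) (α β γ : (Fin (m + 1) → F) → F)
      (hα : ∀ x, α x ≠ 0) (hβ : ∀ x, β x ≠ 0)
      (hαs : SubF (m + 1) α) (hβs : SubF (m + 1) β) (hγs : SubF (m + 1) γ)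
      (b₁ b₂ : Bool) (A : Set (Fin (m + 2) → F))
      (hA : A = {y : Fin (m + 2) → F | Fin.init y ∈ D ∧
        (b₁ = true → lt (α (Fin.init y)) (y (Fin.last (m + 1)) - γ (Fin.init y))) ∧
        (b₂ = true → lt (y (Fin.last (m + 1)) - γ (Fin.init y)) (β (Fin.init y))) ∧
        y (Fin.last (m + 1)) - γ (Fin.init y) ∈ coset lam n})
      (hproj : Fin.init '' A = D) :
      IsCellGen F lt coset SubF A γ lam n

/-- A subanalytic cell in `K^{m+1}` with center `γ` and coset `λ·P_n`. -/
def IsCellWith {m : ℕ} (A : Set (Fin (m + 1) → K)) (γ : (Fin m → K) → K) (lam : K)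
    (n : ℕ) : Prop :=
  IsCellGen K (fun x y => ‖x‖ < ‖y‖) (cosetPn K) (fun _ f => IsSubanalyticFun K f) A γ lam n

/-- The algebra `Ω_an` of simple `q`-exponential functions: the `ℚ`-algebra of functions
`K^m → ℚ` generated by `x ↦ v(h(x))` for `h` subanalytic and nonvanishing and by
`x ↦ |h'(x)| = q^{-v(h'(x))}` for `h'` subanalytic. -/
inductive MemOmegaAn (v : K → ℤ) (q : ℕ) : ∀ {m : ℕ}, ((Fin m → K) → ℚ) → Prop
  | val {m : ℕ} (h : (Fin m → K) → K) (hne : ∀ x, h x ≠ 0) (hs : IsSubanalyticFun K h) :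
      MemOmegaAn v q (fun x => (v (h x) : ℚ))
  | nrm {m : ℕ} (h : (Fin m → K) → K) (hs : IsSubanalyticFun K h) :
      MemOmegaAn v q (fun x => if h x = 0 then 0 else (q : ℚ) ^ (-(v (h x))))
  | const {m : ℕ} (c : ℚ) : MemOmegaAn v q (fun _ : Fin m → K => c)
  | add {m : ℕ} {f g : (Fin m → K) → ℚ} :
      MemOmegaAn v q f → MemOmegaAn v q g → MemOmegaAn v q (fun x => f x + g x)
  | mul {m : ℕ} {f g : (Fin m → K) → ℚ} :
      MemOmegaAn v q f → MemOmegaAn v q g → MemOmegaAn v q (fun x => f x * g x)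

/-- A simple subset of `ℤ^n × K^m`. -/
def IsSimpleSet (v : K → ℤ) {n m : ℕ} (A : Set ((Fin n → ℤ) × (Fin m → K))) : Prop :=
  IsSubanalytic K {y : Fin (n + m) → K |
    (∀ i : Fin n, y (Fin.castAdd m i) ≠ 0) ∧
    ((fun i : Fin n => v (y (Fin.castAdd m i)), fun j : Fin m => y (Fin.natAdd n j)) ∈ A)}

/-- A simple function `ℤ^n × K^m → ℤ` (one whose graph is a simple set). -/
def IsSimpleFun (v : K → ℤ) {n m : ℕ} (h : (Fin n → ℤ) × (Fin m → K) → ℤ) : Prop :=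
  IsSimpleSet K v {zx : (Fin (n + 1) → ℤ) × (Fin m → K) |
    zx.1 (Fin.last n) = h (Fin.init zx.1, zx.2)}

/-- The algebra `Ω_simple`: the `ℚ`-algebra generated by the simple functions and the
functions `q^h` with `h` simple. -/
inductive MemOmegaSimple (v : K → ℤ) (q : ℕ) :
    ∀ {n m : ℕ}, ((Fin n → ℤ) × (Fin m → K) → ℚ) → Prop
  | simple {n m : ℕ} (h : (Fin n → ℤ) × (Fin m → K) → ℤ) (hh : IsSimpleFun K v h) :
      MemOmegaSimple v q (fun zx => (h zx : ℚ))
  | qpow {n m : ℕ} (h : (Fin n → ℤ) × (Fin m → K) → ℤ) (hh : IsSimpleFun K v h) :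
      MemOmegaSimple v q (fun zx => (q : ℚ) ^ (h zx))
  | const {n m : ℕ} (c : ℚ) : MemOmegaSimple v q (fun _ : (Fin n → ℤ) × (Fin m → K) => c)
  | add {n m : ℕ} {f g : (Fin n → ℤ) × (Fin m → K) → ℚ} :
      MemOmegaSimple v q f → MemOmegaSimple v q g → MemOmegaSimple v q (fun zx => f zx + g zx)
  | mul {n m : ℕ} {f g : (Fin n → ℤ) × (Fin m → K) → ℚ} :
      MemOmegaSimple v q f → MemOmegaSimple v q g → MemOmegaSimple v q (fun zx => f zx * g zx)

/-- The data making a normed field `K` a `p`-adic field in the sense of the paper: a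
valuation `v : K → ℤ` and the residue field cardinality `q > 1` with `|x| = q^{-v(x)}`,
`v` attaining the value `1`. -/
structure PadicData (K : Type) [NormedField K] where
  q : ℕ
  one_lt_q : 1 < q
  v : K → ℤ
  norm_eq : ∀ x : K, x ≠ 0 → ‖x‖ = (q : ℝ) ^ (-(v x))
  exists_uniformizer : ∃ π : K, π ≠ 0 ∧ v π = 1
  /-- `q` is the cardinality of the residue field: the closed unit ball is the disjoint
  union of exactly `q` open unit balls. -/
  residue_card : ∃ c : Fin q → K, (∀ i, ‖c i‖ ≤ 1) ∧
    ∀ x : K, ‖x‖ ≤ 1 → ∃! i, ‖x - c i‖ < 1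

/-- The analytic language `L_K`: function symbols `+`, `-`, `·` (binary), `⁻¹` (unary),
a function symbol for each restricted analytic function over `K` (in each arity), and a
unary relation symbol `P_n` for each `n > 0`. -/
def LK : FirstOrder.Language where
  Functions n :=
    {f : (Fin n → K) → K // IsRestrictedAnalytic K f} ⊕
      (match n with
        | 1 => Unit
        | 2 => Fin 3
        | _ => Empty)
  Relations n :=
    match n with
    | 1 => {k : ℕ // 0 < k}
    | _ => Empty

/-- `K` as an `L_K`-structure, with the natural interpretations. -/
noncomputable instance LKStructure : (LK K).Structure K where
  funMap {n} s x :=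
    match n, s, x with
    | _, Sum.inl f, x => f.1 x
    | 1, Sum.inr _, x => (x 0)⁻¹
    | 2, Sum.inr i, x =>
        if i = (0 : Fin 3) then x 0 + x 1 else if i = (1 : Fin 3) then x 0 - x 1 else x 0 * x 1
    | 0, Sum.inr e, _ => e.elim
    | (_ + 3), Sum.inr e, _ => e.elim
  RelMap {n} r x :=
    match n, r, x with
    | 1, k, x => x 0 ∈ Pn K k.1

/-- The symbol for addition in `L_K`. -/
def addSym : (LK K).Functions 2 := Sum.inr (0 : Fin 3)
/-- The symbol for subtraction in `L_K`. -/
def subSym : (LK K).Functions 2 := Sum.inr (1 : Fin 3)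
/-- The symbol for multiplication in `L_K`. -/
def mulSym : (LK K).Functions 2 := Sum.inr (2 : Fin 3)
/-- The symbol for inversion in `L_K`. -/
def invSym : (LK K).Functions 1 := Sum.inr ()
/-- The relation symbol `P_n` in `L_K`. -/
def pnSym (n : ℕ) (hn : 0 < n) : (LK K).Relations 1 := ⟨n, hn⟩

variable (K₁ : Type) [Field K₁] [(LK K).Structure K₁]

/-- A subset of `K₁^m` is subanalytic if it is `L_K`-definable with parameters from `K₁`. -/
def IsSubanalytic1 {m : ℕ} (S : Set (Fin m → K₁)) : Prop :=
  Set.Definable (Set.univ : Set K₁) (LK K) S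

/-- A function `K₁^m → K₁` is subanalytic if its graph is `L_K`-definable with parameters. -/
def IsSubanalyticFun1 (m : ℕ) (g : (Fin m → K₁) → K₁) : Prop :=
  IsSubanalytic1 K K₁ {y : Fin (m + 1) → K₁ | y (Fin.last m) = g (Fin.init y)}

/-- A function `X → K₁`, `X ⊆ K₁^m`, is subanalytic if its graph is definable. -/
def IsSubanalyticFunOn1 {m : ℕ} (X : Set (Fin m → K₁)) (g : (Fin m → K₁) → K₁) : Prop :=
  IsSubanalytic1 K K₁ {y : Fin (m + 1) → K₁ | Fin.init y ∈ X ∧ y (Fin.last m) = g (Fin.init y)}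

/-- The interpretation in `K₁` of the set `P_n`, via the relation symbol `P_n`. -/
def Pn1 (n : ℕ) : Set K₁ :=
  {x | ∃ hn : 0 < n, Language.Structure.RelMap (L := LK K) (pnSym K n hn) ![x]}

/-- The coset `λ·P_n` in `K₁`. -/
def cosetPn1 (lam : K₁) (n : ℕ) : Set K₁ := {y | ∃ z ∈ Pn1 K K₁ n, y = lam * z}


/-- `X ⊆ K^m` admits dimension at least `d`: some `K`-linear image of `X` in `K^d` contains a
nonempty open subset of `K^d`. -/
def DimAtLeast (K : Type) [NormedField K] {m : ℕ} (X : Set (Fin m → K)) (d : ℕ) : Prop :=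
  ∃ π : (Fin m → K) →ₗ[K] (Fin d → K), ∃ U : Set (Fin d → K),
    U.Nonempty ∧ IsOpen U ∧ U ⊆ π '' X

/-- `dim X = d`: `d` is the largest integer such that some `K`-linear image of `X` in `K^d`
contains a nonempty open set. -/
def HasDim (K : Type) [NormedField K] {m : ℕ} (X : Set (Fin m → K)) (d : ℕ) : Prop :=
  DimAtLeast K X d ∧ ∀ d' : ℕ, DimAtLeast K X d' → d' ≤ d

/-!
If `t = μ z^n` then `v t = v μ + n v z`, which gives the congruence. When `k ≡ v μ mod n`, pick
`c ∈ S_k`; then `S_k = c • U_n` with `U_n = P_n ∩ R^×`, and a Haar measure scales under `x ↦ c x`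
by `|c| = q^{-k}`: the modulus of `K` is its norm, because `R` is the disjoint union of `q`
translates of `π • R`. Finally `U_n` is an open subgroup of `R^×` (inverse function theorem for
`z ↦ z^n`, whose derivative `n z^{n-1}` does not vanish), so `R^×` is the disjoint union of
finitely many cosets of `U_n`, say `M`, all of the same measure, and `μ(U_n) = (1 - 1/q) / M`.
-/

open Metric
open scoped Pointwise ENNReal NNReal

theorem smul_set_eq_of_mem_smul_set {M : Type*} [Monoid M] {S : Set M}
    (hS : ∀ y ∈ S, y • S = S) {a c : M} (hc : c ∈ a • S) : c • S = a • S := by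
  obtain ⟨y, hy, rfl⟩ := Set.mem_smul_set.mp hc
  rw [smul_eq_mul, mul_smul, hS y hy]

theorem exists_measure_sUnion_eq_natCast_mul {α : Type*} [MeasurableSpace α] {μ : Measure α}
    {C : Set (Set α)} (hdisj : C.PairwiseDisjoint id) (hmeas : ∀ s ∈ C, MeasurableSet s)
    {τ : ℝ≥0∞} (hτ : τ ≠ 0) (hval : ∀ s ∈ C, μ s = τ) (hfin : μ (⋃₀ C) ≠ ∞) :
    ∃ M : ℕ, μ (⋃₀ C) = M * τ := by
  have hC : C.Finite := by
    have := Measure.finite_const_le_meas_of_disjoint_iUnion μ (pos_iff_ne_zero.mpr hτ)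
      (As := fun s : C => (s : Set α)) (fun s => hmeas s s.2)
      (fun s t hst => hdisj s.2 t.2 (Subtype.coe_ne_coe.mpr hst))
      (by rwa [← Set.sUnion_eq_iUnion])
    refine Set.finite_coe_iff.mp (Set.finite_univ_iff.mp ?_)
    convert this using 1
    ext s
    simp [hval s s.2]
  obtain ⟨S, rfl⟩ := hC.exists_finset_coe
  refine ⟨S.card, ?_⟩
  calc μ (⋃₀ ↑S) = ∑ s ∈ S, μ s := by
        rw [Set.sUnion_eq_biUnion, Finset.set_biUnion_coe]
        exact measure_biUnion_finset hdisj hmeas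
    _ = S.card * τ := by rw [Finset.sum_congr rfl hval, Finset.sum_const, nsmul_eq_mul]

theorem norm_natCast_le_one_of_continuous_algebraMap {p : ℕ} [Fact p.Prime] {F : Type*}
    [NormedField F] [Algebra ℚ_[p] F] (hcont : Continuous (algebraMap ℚ_[p] F)) (j : ℕ) :
    ‖(j : F)‖ ≤ 1 := by
  obtain ⟨C, hC⟩ := ((isCompact_closedBall (0 : ℚ_[p]) 1).image hcont).isBounded.exists_norm_le
  by_contra! hj
  obtain ⟨i, hi⟩ := pow_unbounded_of_one_lt C hj
  have hmem : (j : ℚ_[p]) ^ i ∈ closedBall (0 : ℚ_[p]) 1 := by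
    rw [mem_closedBall_zero_iff, norm_pow]
    exact pow_le_one₀ (norm_nonneg _) (by exact_mod_cast Padic.norm_int_le_one (p := p) j)
  have := hC _ ⟨_, hmem, rfl⟩
  rw [map_pow, map_natCast, norm_pow] at this
  linarith

theorem isOpen_Pn {F : Type} [NontriviallyNormedField F] [CompleteSpace F] {n : ℕ}
    (hn : (n : F) ≠ 0) : IsOpen (Pn F n) := by
  rw [isOpen_iff_mem_nhds]
  rintro _ ⟨z, hz, rfl⟩
  have hderiv : HasStrictDerivAt (· ^ n) (n * z ^ (n - 1)) z := hasStrictDerivAt_pow n z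
  rw [← hderiv.map_nhds_eq (mul_ne_zero hn (pow_ne_zero _ hz))]
  exact Filter.mem_map.mpr <|
    Filter.mem_of_superset (isOpen_ne.mem_nhds hz) fun w hw => ⟨w, hw, rfl⟩

variable {K}

theorem ne_zero_of_mem_Pn {n : ℕ} {y : K} (hy : y ∈ Pn K n) : y ≠ 0 := by
  obtain ⟨z, hz, rfl⟩ := hy
  exact pow_ne_zero n hz

theorem one_mem_Pn (n : ℕ) : (1 : K) ∈ Pn K n := ⟨1, one_ne_zero, (one_pow n).symm⟩

theorem smul_Pn_of_mem {n : ℕ} {y : K} (hy : y ∈ Pn K n) : y • Pn K n = Pn K n := by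
  obtain ⟨w, hw, rfl⟩ := hy
  ext x
  constructor
  · rintro ⟨_, ⟨z, hz, rfl⟩, rfl⟩
    exact ⟨w * z, mul_ne_zero hw hz, by simp only [smul_eq_mul, mul_pow]⟩
  · rintro ⟨z, hz, rfl⟩
    refine Set.mem_smul_set.mpr ⟨(z / w) ^ n, ⟨z / w, div_ne_zero hz hw, rfl⟩, ?_⟩
    rw [smul_eq_mul, ← mul_pow, mul_div_cancel₀ z hw]

theorem cosetPn_eq_smul (lam : K) (n : ℕ) : cosetPn K lam n = lam • Pn K n := by
  ext y
  exact ⟨fun ⟨z, hz, hy⟩ => ⟨z, hz, hy.symm⟩, fun ⟨z, hz, hy⟩ => ⟨z, hz, hy.symm⟩⟩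

theorem ne_zero_of_mem_cosetPn {a c : K} (ha : a ≠ 0) {n : ℕ} (hc : c ∈ cosetPn K a n) :
    c ≠ 0 := by
  obtain ⟨y, hy, rfl⟩ := hc
  exact mul_ne_zero ha (ne_zero_of_mem_Pn hy)

def unitsPn (n : ℕ) : Set K := Pn K n ∩ sphere 0 1

theorem one_mem_unitsPn (n : ℕ) : (1 : K) ∈ unitsPn n := ⟨one_mem_Pn n, by simp⟩

theorem smul_unitsPn_of_mem {n : ℕ} {y : K} (hy : y ∈ unitsPn n) :
    y • unitsPn (K := K) n = unitsPn n := by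
  have hy0 : y ≠ 0 := ne_zero_of_mem_Pn hy.1
  rw [unitsPn, Set.smul_set_inter₀ hy0, smul_Pn_of_mem hy.1, smul_sphere' hy0, smul_zero,
    mem_sphere_zero_iff_norm.mp hy.2, mul_one]

namespace PadicData

theorem one_lt_q_real (ctx : PadicData K) : (1 : ℝ) < ctx.q := by exact_mod_cast ctx.one_lt_q

theorem exists_norm_ne_one (ctx : PadicData K) : ∃ x : K, x ≠ 0 ∧ ‖x‖ ≠ 1 := by
  obtain ⟨π, hπ, hπv⟩ := ctx.exists_uniformizer
  refine ⟨π, hπ, ?_⟩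
  rw [ctx.norm_eq π hπ, hπv]
  exact (zpow_lt_one_of_neg₀ ctx.one_lt_q_real (by norm_num)).ne

theorem v_eq_iff_norm_eq (ctx : PadicData K) {x : K} (hx : x ≠ 0) {k : ℤ} :
    ctx.v x = k ↔ ‖x‖ = (ctx.q : ℝ) ^ (-k) := by
  rw [ctx.norm_eq x hx, (zpow_right_strictMono₀ ctx.one_lt_q_real).injective.eq_iff, neg_inj]

theorem v_eq_v_iff (ctx : PadicData K) {x y : K} (hx : x ≠ 0) (hy : y ≠ 0) :
    ctx.v x = ctx.v y ↔ ‖x‖ = ‖y‖ := by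
  rw [ctx.v_eq_iff_norm_eq hx, ctx.norm_eq y hy]

theorem v_mul_pow (ctx : PadicData K) {a z : K} (ha : a ≠ 0) (hz : z ≠ 0) (n : ℕ) :
    ctx.v (a * z ^ n) = ctx.v a + n * ctx.v z := by
  have hq : (ctx.q : ℝ) ≠ 0 := (zero_lt_one.trans ctx.one_lt_q_real).ne'
  rw [ctx.v_eq_iff_norm_eq (mul_ne_zero ha (pow_ne_zero n hz)), norm_mul, norm_pow,
    ctx.norm_eq a ha, ctx.norm_eq z hz, ← zpow_natCast, ← zpow_mul, ← zpow_add₀ hq]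
  ring_nf

theorem exists_v_eq (ctx : PadicData K) (j : ℤ) : ∃ z : K, z ≠ 0 ∧ ctx.v z = j := by
  obtain ⟨π, hπ, hπv⟩ := ctx.exists_uniformizer
  refine ⟨π ^ j, zpow_ne_zero j hπ, ?_⟩
  rw [ctx.v_eq_iff_norm_eq (zpow_ne_zero j hπ), norm_zpow, ctx.norm_eq π hπ, hπv, ← zpow_mul]
  ring_nf

theorem v_modEq_of_mem_cosetPn (ctx : PadicData K) {a t : K} (ha : a ≠ 0) {n : ℕ}
    (ht : t ∈ cosetPn K a n) : ctx.v t ≡ ctx.v a [ZMOD n] := by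
  obtain ⟨_, ⟨z, hz, rfl⟩, rfl⟩ := ht
  exact Int.modEq_iff_dvd.mpr ⟨-ctx.v z, by rw [ctx.v_mul_pow ha hz]; ring⟩

theorem exists_mem_cosetPn_v_eq (ctx : PadicData K) {a : K} (ha : a ≠ 0) {n : ℕ} {k : ℤ}
    (hk : k ≡ ctx.v a [ZMOD n]) : ∃ c ∈ cosetPn K a n, ctx.v c = k := by
  obtain ⟨j, hj⟩ := Int.modEq_iff_dvd.mp hk.symm
  obtain ⟨z, hz, hzv⟩ := ctx.exists_v_eq j
  exact ⟨a * z ^ n, ⟨z ^ n, ⟨z, hz, rfl⟩, rfl⟩, by rw [ctx.v_mul_pow ha hz, hzv]; linarith⟩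

theorem setOf_mem_cosetPn_v_eq (ctx : PadicData K) {a c : K} (ha : a ≠ 0) {n : ℕ} {k : ℤ}
    (hc : c ∈ cosetPn K a n) (hcv : ctx.v c = k) :
    {t : K | t ∈ cosetPn K a n ∧ ctx.v t = k} = c • unitsPn n := by
  have hc0 := ne_zero_of_mem_cosetPn ha hc
  rw [cosetPn_eq_smul] at hc ⊢
  rw [← smul_set_eq_of_mem_smul_set (fun _ => smul_Pn_of_mem) hc, unitsPn,
    Set.smul_set_inter₀ hc0, smul_sphere' hc0, smul_zero, mul_one, ← hcv]
  ext t
  refine and_congr_right fun ht => ?_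
  obtain ⟨y, hy, rfl⟩ := Set.mem_smul_set.mp ht
  rw [smul_eq_mul, mem_sphere_zero_iff_norm,
    ctx.v_eq_v_iff (mul_ne_zero hc0 (ne_zero_of_mem_Pn hy)) hc0]

theorem ball_zero_one_eq_closedBall (ctx : PadicData K) :
    ball (0 : K) 1 = closedBall 0 (ctx.q : ℝ)⁻¹ := by
  ext y
  rw [mem_ball_zero_iff, mem_closedBall_zero_iff]
  rcases eq_or_ne y 0 with rfl | hy
  · simp
  · rw [ctx.norm_eq y hy, ← zpow_neg_one, ← zpow_zero (ctx.q : ℝ),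
      zpow_lt_zpow_iff_right₀ ctx.one_lt_q_real, zpow_le_zpow_iff_right₀ ctx.one_lt_q_real]
    omega

section Ultrametric

variable [IsUltrametricDist K]

theorem exists_closedBall_one_eq_iUnion_ball (ctx : PadicData K) :
    ∃ c : Fin ctx.q → K, closedBall (0 : K) 1 = ⋃ i, ball (c i) 1 ∧
      Pairwise (Function.onFun Disjoint fun i => ball (c i) 1) := by
  obtain ⟨c, hc, hcu⟩ := ctx.residue_card
  have hsub : ∀ i, ball (c i) 1 ⊆ closedBall 0 1 := fun i y hy =>
    (IsUltrametricDist.dist_triangle_max y (c i) 0).trans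
      (max_le (mem_ball.mp hy).le (mem_closedBall_zero_iff.mpr (hc i)))
  refine ⟨c, subset_antisymm (fun y hy => ?_) (Set.iUnion_subset hsub), fun i j hij => ?_⟩
  · obtain ⟨i, hi, -⟩ := hcu y (mem_closedBall_zero_iff.mp hy)
    exact Set.mem_iUnion.mpr ⟨i, by rwa [mem_ball, dist_eq_norm]⟩
  · refine Set.disjoint_left.mpr fun y hyi hyj => hij ?_
    obtain ⟨_, -, huniq⟩ := hcu y (mem_closedBall_zero_iff.mp (hsub i hyi))
    rw [mem_ball, dist_eq_norm] at hyi hyj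
    exact (huniq i hyi).trans (huniq j hyj).symm

theorem q_mul_measure_ball_one (ctx : PadicData K) [MeasurableSpace K] [BorelSpace K]
    (μ : Measure K) [μ.IsAddHaarMeasure] : ctx.q * μ (ball 0 1) = μ (closedBall 0 1) := by
  obtain ⟨c, hcover, hdisj⟩ := ctx.exists_closedBall_one_eq_iUnion_ball
  rw [hcover, measure_iUnion hdisj fun _ => measurableSet_ball, tsum_fintype]
  simp [Measure.addHaar_ball_center]

theorem isOpen_unitsPn [CompleteSpace K] (ctx : PadicData K) {n : ℕ} (hn : (n : K) ≠ 0) :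
    IsOpen (unitsPn (K := K) n) := by
  let := NontriviallyNormedField.ofNormNeOne ctx.exists_norm_ne_one
  exact (isOpen_Pn hn).inter (IsUltrametricDist.isOpen_sphere 0 one_ne_zero)

variable [ProperSpace K]

theorem distribHaarChar_eq_nnnorm (ctx : PadicData K) (u : Kˣ) :
    distribHaarChar K u = ‖(u : K)‖₊ := by
  borelize K
  let μ : Measure K := Measure.addHaar
  have h0 : μ (closedBall 0 1) ≠ 0 := (measure_closedBall_pos μ 0 one_pos).ne'
  have htop : μ (closedBall 0 1) ≠ ∞ := measure_closedBall_lt_top.ne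
  have hsmul : ∀ w : Kˣ, w • closedBall (0 : K) 1 = closedBall 0 ‖(w : K)‖ := fun w => by
    change (w : K) • closedBall (0 : K) 1 = _
    rw [smul_closedBall' w.ne_zero, smul_zero, mul_one]
  have hunit : ∀ w : Kˣ, ‖(w : K)‖ = 1 → distribHaarChar K w = 1 := fun w hw =>
    distribHaarChar_eq_of_measure_smul_eq_mul h0 htop (by rw [hsmul, hw, ENNReal.coe_one, one_mul])
  obtain ⟨π, hπ, hπv⟩ := ctx.exists_uniformizer
  set π' : Kˣ := Units.mk0 π hπ
  have hπnorm : ‖(π' : K)‖ = (ctx.q : ℝ)⁻¹ := by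
    rw [Units.val_mk0, ctx.norm_eq π hπ, hπv, zpow_neg_one]
  have hπchar : distribHaarChar K π' = (ctx.q : ℝ≥0)⁻¹ :=
    distribHaarChar_eq_of_measure_smul_eq_mul h0 htop (by
      have hq : (ctx.q : ℝ≥0∞) ≠ 0 := by simpa using (zero_lt_one.trans ctx.one_lt_q).ne'
      rw [hsmul, hπnorm, ← ctx.ball_zero_one_eq_closedBall, ← ctx.q_mul_measure_ball_one μ,
        ENNReal.coe_inv (by simpa using hq), ENNReal.coe_natCast, ← mul_assoc,
        ENNReal.inv_mul_cancel hq (ENNReal.natCast_ne_top _), one_mul])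
  have hw : ‖((π' ^ (-ctx.v u) * u : Kˣ) : K)‖ = 1 := by
    have hq : (ctx.q : ℝ) ≠ 0 := (zero_lt_one.trans ctx.one_lt_q_real).ne'
    rw [Units.val_mul, Units.val_zpow_eq_zpow_val, norm_mul, norm_zpow, hπnorm,
      ctx.norm_eq _ u.ne_zero, inv_zpow', neg_neg, ← zpow_add₀ hq, add_neg_cancel, zpow_zero]
  calc distribHaarChar K u = distribHaarChar K (π' ^ ctx.v u * (π' ^ (-ctx.v u) * u)) := by
        rw [← mul_assoc, ← zpow_add, add_neg_cancel, zpow_zero, one_mul]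
    _ = (ctx.q : ℝ≥0)⁻¹ ^ ctx.v u := by rw [map_mul, map_zpow, hπchar, hunit _ hw, mul_one]
    _ = ‖(u : K)‖₊ := by
        ext
        rw [NNReal.coe_zpow, NNReal.coe_inv, NNReal.coe_natCast, coe_nnnorm,
          ctx.norm_eq _ u.ne_zero, inv_zpow']

variable [MeasurableSpace K] [BorelSpace K] (μ : Measure K) [μ.IsAddHaarMeasure]

theorem measure_smul (ctx : PadicData K) {c : K} (hc : c ≠ 0) (s : Set K) :
    μ (c • s) = ‖c‖ₑ * μ s := by
  have := distribHaarChar_mul μ (Units.mk0 c hc) s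
  rw [ctx.distribHaarChar_eq_nnnorm, Units.val_mk0] at this
  exact this.symm

theorem measure_sphere_one (ctx : PadicData K) (hμ : μ (closedBall 0 1) = 1) :
    μ (sphere 0 1) = ENNReal.ofReal (1 - (ctx.q : ℝ)⁻¹) := by
  have hq : (0 : ℝ) < ctx.q := zero_lt_one.trans ctx.one_lt_q_real
  have hball : μ (ball 0 1) = (ctx.q : ℝ≥0∞)⁻¹ := by
    refine ENNReal.eq_inv_of_mul_eq_one_left ?_
    rw [mul_comm, ctx.q_mul_measure_ball_one μ, hμ]
  rw [← closedBall_sdiff_ball, measure_sdiff ball_subset_closedBall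
    measurableSet_ball.nullMeasurableSet measure_ball_lt_top.ne, hμ, hball,
    ENNReal.ofReal_sub _ (by positivity), ENNReal.ofReal_one, ENNReal.ofReal_inv_of_pos hq,
    ENNReal.ofReal_natCast]

theorem exists_measure_sphere_eq_natCast_mul (ctx : PadicData K) {n : ℕ} (hn : (n : K) ≠ 0) :
    ∃ M : ℕ, μ (sphere 0 1) = M * μ (unitsPn n) := by
  have hopen := ctx.isOpen_unitsPn hn
  have hne : ∀ a ∈ sphere (0 : K) 1, a ≠ 0 := fun a ha => ne_zero_of_mem_sphere one_ne_zero ⟨a, ha⟩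
  have hcover : ⋃₀ ((fun a : K => a • unitsPn (K := K) n) '' sphere 0 1) = sphere 0 1 := by
    refine subset_antisymm (Set.sUnion_subset ?_) fun a ha => ⟨a • unitsPn n, ⟨a, ha, rfl⟩,
      Set.mem_smul_set.mpr ⟨1, one_mem_unitsPn n, mul_one a⟩⟩
    rintro _ ⟨a, ha, rfl⟩
    calc a • unitsPn (K := K) n ⊆ a • sphere 0 1 := Set.smul_set_mono Set.inter_subset_right
      _ = sphere 0 1 := by
        rw [smul_sphere' (hne a ha), smul_zero, mem_sphere_zero_iff_norm.mp ha, one_mul]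
  rw [← hcover]
  refine exists_measure_sUnion_eq_natCast_mul ?_ ?_
    (hopen.measure_pos μ ⟨1, one_mem_unitsPn n⟩).ne' ?_ ?_
  · rintro _ ⟨a, -, rfl⟩ _ ⟨b, -, rfl⟩ hab
    refine Set.disjoint_left.mpr fun y hya hyb => hab ?_
    exact (smul_set_eq_of_mem_smul_set (fun _ => smul_unitsPn_of_mem) hya).symm.trans
      (smul_set_eq_of_mem_smul_set (fun _ => smul_unitsPn_of_mem) hyb)
  · rintro _ ⟨a, ha, rfl⟩
    exact (hopen.smul₀ (hne a ha)).measurableSet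
  · rintro _ ⟨a, ha, rfl⟩
    rw [ctx.measure_smul μ (hne a ha), ← ofReal_norm, mem_sphere_zero_iff_norm.mp ha,
      ENNReal.ofReal_one, one_mul]
  · rw [hcover]
    exact ((measure_mono sphere_subset_closedBall).trans_lt measure_closedBall_lt_top).ne

theorem exists_measure_setOf_mem_cosetPn_v_eq (ctx : PadicData K)
    (hμ : μ (closedBall 0 1) = 1) {a : K} (ha : a ≠ 0) {n : ℕ} (hn : (n : K) ≠ 0) :
    ∃ ε : ℚ, 0 < ε ∧ ∀ k : ℤ, k ≡ ctx.v a [ZMOD n] →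
      μ {t : K | t ∈ cosetPn K a n ∧ ctx.v t = k} = ENNReal.ofReal (ε * (ctx.q : ℝ) ^ (-k)) := by
  obtain ⟨M, hM⟩ := ctx.exists_measure_sphere_eq_natCast_mul μ hn
  rw [ctx.measure_sphere_one μ hμ] at hM
  have hq : (1 : ℚ) < ctx.q := by exact_mod_cast ctx.one_lt_q
  have hq' : (0 : ℝ) < 1 - (ctx.q : ℝ)⁻¹ := sub_pos.mpr (inv_lt_one_of_one_lt₀ ctx.one_lt_q_real)
  have hM0 : 0 < M := Nat.pos_of_ne_zero fun hM0 => by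
    simp only [hM0, Nat.cast_zero, zero_mul, ENNReal.ofReal_eq_zero] at hM
    linarith
  have hT : μ (unitsPn n) = ENNReal.ofReal ((1 - (ctx.q : ℝ)⁻¹) / M) := by
    rw [ENNReal.ofReal_div_of_pos (by positivity), hM, ENNReal.ofReal_natCast,
      mul_comm, ENNReal.mul_div_cancel_right (by positivity) (ENNReal.natCast_ne_top M)]
  refine ⟨(1 - (ctx.q : ℚ)⁻¹) / M, div_pos (sub_pos.mpr (inv_lt_one_of_one_lt₀ hq))
    (by positivity), fun k hk => ?_⟩
  obtain ⟨c, hc, hcv⟩ := ctx.exists_mem_cosetPn_v_eq ha hk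
  have hc0 := ne_zero_of_mem_cosetPn ha hc
  rw [ctx.setOf_mem_cosetPn_v_eq ha hc hcv, ctx.measure_smul μ hc0, hT, ← ofReal_norm,
    ← ENNReal.ofReal_mul (norm_nonneg _), (ctx.v_eq_iff_norm_eq hc0).mp hcv]
  push_cast
  ring_nf

end Ultrametric

end PadicData

theorem statement11 {p : ℕ} [Fact p.Prime] (K : Type) [NormedField K]
    [Algebra ℚ_[p] K] [FiniteDimensional ℚ_[p] K]
    (hcont : Continuous (algebraMap ℚ_[p] K)) (ctx : PadicData K)
    (μ0 : K) (hμ0 : μ0 ≠ 0) (n : ℕ) (hn : 0 < n)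
    [MeasurableSpace K] [BorelSpace K]
    (μH : MeasureTheory.Measure K) [μH.IsAddHaarMeasure]
    (hμH : μH {x : K | ‖x‖ ≤ 1} = 1) :
    (∀ k : ℤ, ¬ k ≡ ctx.v μ0 [ZMOD (n : ℤ)] →
      {t : K | t ∈ cosetPn K μ0 n ∧ ctx.v t = k} = ∅) ∧
    ∃ ε : ℚ, 0 < ε ∧ ∀ k : ℤ, k ≡ ctx.v μ0 [ZMOD (n : ℤ)] →
      μH {t : K | t ∈ cosetPn K μ0 n ∧ ctx.v t = k} =
        ENNReal.ofReal ((ε : ℝ) * (ctx.q : ℝ) ^ (-k)) := by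
  have : CharZero K := charZero_of_injective_algebraMap (algebraMap ℚ_[p] K).injective
  have : IsUltrametricDist K := IsUltrametricDist.isUltrametricDist_of_forall_norm_natCast_le_one
    (norm_natCast_le_one_of_continuous_algebraMap hcont)
  have : ContinuousSMul ℚ_[p] K := continuousSMul_of_algebraMap _ _ hcont
  have : LocallyCompactSpace K := .of_finiteDimensional_of_complete ℚ_[p] K
  have : ProperSpace K :=
    let := NontriviallyNormedField.ofNormNeOne ctx.exists_norm_ne_one
    .of_locallyCompactSpace K
  refine ⟨fun k hk => Set.eq_empty_of_forall_notMem fun t ⟨ht, htk⟩ =>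
    hk (htk ▸ ctx.v_modEq_of_mem_cosetPn hμ0 ht), ?_⟩
  refine ctx.exists_measure_setOf_mem_cosetPn_v_eq μH ?_ hμ0 (Nat.cast_ne_zero.mpr hn.ne')
  simpa [closedBall, dist_eq_norm] using hμH

end PadicCell
end

section
/- For subanalytic functions α, β : K^m → K^× and integers n > 0 and a₁, a₂, the characteristic function of the set {λ ∈ K^m : v(α(λ)) ≡ a₁ mod n and v(β(λ)) ≡ a₂ mod n} is a simple q-exponential function, i.e. it belongs to Ω_an. -/
open MeasureTheory
open scoped Classical
open FirstOrder

namespace PadicCell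

variable (K : Type) [NormedField K]

variable (K₁ : Type) [Field K₁] [(LK K).Structure K₁]

/-! The residue of `v(α λ)` modulo `n` only depends on the coset of `α λ` modulo `P_n`. By
Hensel's lemma `P_n` is a neighbourhood of `1`, so its cosets are open and, `K` being locally
compact, finitely many of them cover `K^×`. For a uniformizer `π`, the function `k` equal to `α`
where `v(α) ≡ a mod n` and to `π α` elsewhere therefore has a subanalytic graph: a finite union of
pieces of the graphs of `α` and `π α` cut out by coset conditions on the last coordinate. Since
`|k| |α⁻¹|` is `1` or `q⁻¹`, the indicator of `v(α) ≡ a mod n` is `(q |k| |α⁻¹| - 1) / (q - 1)`,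
and the characteristic function of the theorem is a product of two such indicators. -/

open scoped Topology

namespace PadicData

variable {K : Type} [NormedField K] (ctx : PadicData K)

lemma one_lt_q_real_s15 : (1 : ℝ) < ctx.q := by exact_mod_cast ctx.one_lt_q

lemma v_mul {x y : K} (hx : x ≠ 0) (hy : y ≠ 0) : ctx.v (x * y) = ctx.v x + ctx.v y := by
  have h := ctx.norm_eq (x * y) (mul_ne_zero hx hy)
  rw [norm_mul, ctx.norm_eq x hx, ctx.norm_eq y hy,
    ← zpow_add₀ (zero_lt_one.trans ctx.one_lt_q_real_s15).ne'] at h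
  have := zpow_right_injective₀ (zero_lt_one.trans ctx.one_lt_q_real_s15) ctx.one_lt_q_real_s15.ne' h
  omega

lemma v_pow {x : K} (hx : x ≠ 0) (k : ℕ) : ctx.v (x ^ k) = k * ctx.v x := by
  induction k with
  | zero =>
    have h := ctx.v_mul one_ne_zero (one_ne_zero (α := K))
    rw [mul_one] at h
    simp only [pow_zero, CharP.cast_eq_zero, zero_mul]
    omega
  | succ k ih =>
    rw [pow_succ, ctx.v_mul (pow_ne_zero _ hx) hx, ih]
    push_cast
    ring

lemma v_modEq_of_mem_cosetPn_s15 {c y : K} (hc : c ≠ 0) {n : ℕ} (hy : y ∈ cosetPn K c n) :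
    ctx.v y ≡ ctx.v c [ZMOD n] := by
  obtain ⟨_, ⟨z, hz, rfl⟩, rfl⟩ := hy
  rw [ctx.v_mul hc (pow_ne_zero _ hz), ctx.v_pow hz]
  exact (Int.modEq_iff_dvd.2 ⟨ctx.v z, by ring⟩).symm

lemma exists_norm_eq_inv_q : ∃ π : K, ‖π‖ = (ctx.q : ℝ)⁻¹ := by
  obtain ⟨π, hπ0, hπ⟩ := ctx.exists_uniformizer
  exact ⟨π, by rw [ctx.norm_eq π hπ0, hπ, zpow_neg_one]⟩

lemma exists_one_lt_norm (ctx : PadicData K) : ∃ x : K, 1 < ‖x‖ := by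
  obtain ⟨π, hπ⟩ := ctx.exists_norm_eq_inv_q
  exact ⟨π⁻¹, by rw [norm_inv, hπ, inv_inv]; exact ctx.one_lt_q_real_s15⟩

noncomputable def normQ (y : K) : ℚ := if y = 0 then 0 else (ctx.q : ℚ) ^ (-ctx.v y)

lemma cast_normQ (y : K) : (ctx.normQ y : ℝ) = ‖y‖ := by
  unfold normQ
  split_ifs with hy
  · simp [hy]
  · rw [ctx.norm_eq y hy]
    push_cast
    rfl

end PadicData

lemma memOmegaAn_normQ {K : Type} [NormedField K] (ctx : PadicData K) {m : ℕ}
    {h : (Fin m → K) → K} (hh : IsSubanalyticFun K h) :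
    MemOmegaAn K ctx.v ctx.q (fun x => ctx.normQ (h x)) :=
  .nrm h hh

section PadicField

variable {p : ℕ} [Fact p.Prime] {K : Type} [NormedField K] [Algebra ℚ_[p] K]

lemma norm_natCast_le_one_of_continuous_algebraMap_s15 (hcont : Continuous (algebraMap ℚ_[p] K))
    (k : ℕ) : ‖(k : K)‖ ≤ 1 := by
  obtain ⟨C, hC⟩ :=
    ((isCompact_closedBall (0 : ℚ_[p]) 1).image hcont).isBounded.exists_norm_le
  by_contra! hk
  obtain ⟨j, hj⟩ := pow_unbounded_of_one_lt C hk
  have hkj : (k : ℚ_[p]) ^ j ∈ Metric.closedBall 0 1 := by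
    simpa using pow_le_one₀ (norm_nonneg _) (IsUltrametricDist.norm_natCast_le_one ℚ_[p] k)
  have := hC _ (Set.mem_image_of_mem _ hkj)
  rw [map_pow, map_natCast, norm_pow] at this
  linarith

lemma isUltrametricDist_of_continuous_algebraMap (hcont : Continuous (algebraMap ℚ_[p] K)) :
    IsUltrametricDist K :=
  IsUltrametricDist.isUltrametricDist_of_forall_norm_natCast_le_one
    (norm_natCast_le_one_of_continuous_algebraMap_s15 hcont)

lemma properSpace_of_continuous_algebraMap [FiniteDimensional ℚ_[p] K]
    (hcont : Continuous (algebraMap ℚ_[p] K)) (hK : ∃ x : K, 1 < ‖x‖) : ProperSpace K := by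
  have : ContinuousSMul ℚ_[p] K := continuousSMul_of_algebraMap _ _ hcont
  have := LocallyCompactSpace.of_finiteDimensional_of_complete ℚ_[p] K
  let : NontriviallyNormedField K := { ‹NormedField K› with non_trivial := hK }
  exact ProperSpace.of_locallyCompactSpace K

end PadicField

section Hensel

variable {K : Type} [NormedField K] [IsUltrametricDist K]

lemma norm_mul_sub_one_le {a b : K} {r : ℝ} (hr : r ≤ 1) (ha : ‖a - 1‖ ≤ r)
    (hb : ‖b - 1‖ ≤ r) : ‖a * b - 1‖ ≤ r := by
  have ha1 : ‖a‖ ≤ 1 := by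
    simpa [hr] using (IsUltrametricDist.norm_add_le_max (a - 1) 1).trans
      (max_le_max ha le_rfl)
  calc ‖a * b - 1‖ = ‖a * (b - 1) + (a - 1)‖ := by ring_nf
    _ ≤ max ‖a * (b - 1)‖ ‖a - 1‖ := IsUltrametricDist.norm_add_le_max _ _
    _ ≤ r := max_le (by rw [norm_mul]; nlinarith [norm_nonneg a, norm_nonneg (b - 1)]) ha

lemma norm_pow_sub_one_le {a : K} {r : ℝ} (hr : r ≤ 1) (ha : ‖a - 1‖ ≤ r) (k : ℕ) :
    ‖a ^ k - 1‖ ≤ r := by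
  induction k with
  | zero => simpa using (norm_nonneg _).trans ha
  | succ k ih => rw [pow_succ]; exact norm_mul_sub_one_le hr ih ha

lemma norm_one_add_pow_sub_one_add_pow_sub_le {y y' : K} (hy : ‖y‖ ≤ 1) (hy' : ‖y'‖ ≤ 1)
    (n : ℕ) :
    ‖(1 + y) ^ n - (1 + y') ^ n - n * (y - y')‖ ≤ max ‖y‖ ‖y'‖ * ‖y - y'‖ := by
  have hr : max ‖y‖ ‖y'‖ ≤ 1 := max_le hy hy'
  have hsum : (1 + y) ^ n - (1 + y') ^ n - n * (y - y') =
      (∑ i ∈ Finset.range n, ((1 + y) ^ i * (1 + y') ^ (n - 1 - i) - 1)) * (y - y') := by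
    rw [Finset.sum_sub_distrib, sub_mul, show y - y' = (1 + y) - (1 + y') by ring, geom_sum₂_mul]
    simp only [Finset.sum_const, Finset.card_range, nsmul_eq_mul, mul_one]
  rw [hsum, norm_mul]
  gcongr
  refine IsUltrametricDist.norm_sum_le_of_forall_le_of_nonneg (by positivity) fun i _ => ?_
  exact norm_mul_sub_one_le hr (norm_pow_sub_one_le hr (by simp) _)
    (norm_pow_sub_one_le hr (by simp) _)

variable [CompleteSpace K]

/-- Hensel's lemma for `X^n - (1 + t)`, via the contraction `y ↦ (t - ((1+y)^n - 1 - n y)) / n`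
of the ball of radius `‖n‖ / 2`. -/
lemma exists_one_add_pow_eq {n : ℕ} (hn : (n : K) ≠ 0) {t : K}
    (ht : ‖t‖ < ‖(n : K)‖ ^ 2 / 2) :
    ∃ y : K, ‖y‖ ≤ ‖(n : K)‖ / 2 ∧ (1 + y) ^ n = 1 + t := by
  set ε := ‖(n : K)‖
  have hε : 0 < ε := norm_pos_iff.2 hn
  have hε1 : ε ≤ 1 := IsUltrametricDist.norm_natCast_le_one K n
  set s := Metric.closedBall (0 : K) (ε / 2)
  set Φ : K → K := fun y => (t - ((1 + y) ^ n - 1 - n * y)) / n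
  have hs1 : ∀ y ∈ s, ‖y‖ ≤ 1 := fun y hy =>
    (mem_closedBall_zero_iff.1 hy).trans (by linarith)
  have hΦs : Set.MapsTo Φ s s := by
    intro y hy
    have hy' := mem_closedBall_zero_iff.1 hy
    have hq : ‖(1 + y) ^ n - 1 - n * y‖ ≤ ‖y‖ * ‖y‖ := by
      simpa using norm_one_add_pow_sub_one_add_pow_sub_le (y' := 0) (hs1 y hy) (by simp) n
    rw [mem_closedBall_zero_iff, norm_div, div_le_iff₀ hε, sub_eq_add_neg]
    refine (IsUltrametricDist.norm_add_le_max _ _).trans (max_le (by nlinarith) ?_)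
    rw [norm_neg]
    exact hq.trans (by nlinarith [norm_nonneg y])
  have hΦ : ContractingWith 2⁻¹ (hΦs.restrict Φ s s) := by
    refine ⟨two_inv_lt_one, LipschitzWith.of_dist_le_mul fun y y' => ?_⟩
    have hq := norm_one_add_pow_sub_one_add_pow_sub_le (hs1 y y.2) (hs1 y' y'.2) n
    have hmax : max ‖(y : K)‖ ‖(y' : K)‖ ≤ ε / 2 :=
      max_le (mem_closedBall_zero_iff.1 y.2) (mem_closedBall_zero_iff.1 y'.2)
    simp only [Set.MapsTo.val_restrict_apply, Subtype.dist_eq, dist_eq_norm, Φ]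
    rw [div_sub_div_same, norm_div, div_le_iff₀ hε, NNReal.coe_inv, NNReal.coe_ofNat]
    calc ‖t - ((1 + y) ^ n - 1 - n * y) - (t - ((1 + y') ^ n - 1 - n * y'))‖
        = ‖(1 + (y : K)) ^ n - (1 + y') ^ n - n * (y - y')‖ := by
          rw [← norm_neg]; ring_nf
      _ ≤ ε / 2 * ‖(y : K) - y'‖ := hq.trans (by gcongr)
      _ = 2⁻¹ * ‖(y : K) - y'‖ * ε := by ring
  obtain ⟨y, hys, hfix, -⟩ :=
    hΦ.exists_fixedPoint' Metric.isClosed_closedBall.isComplete hΦs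
      (Metric.mem_closedBall_self (by positivity)) (edist_ne_top _ _)
  refine ⟨y, mem_closedBall_zero_iff.1 hys, ?_⟩
  have hfix : Φ y = y := hfix
  simp only [Φ, div_eq_iff hn] at hfix
  linear_combination -hfix

theorem pn_mem_nhds_one {n : ℕ} (hn : (n : K) ≠ 0) : Pn K n ∈ 𝓝 (1 : K) := by
  have hε : 0 < ‖(n : K)‖ := norm_pos_iff.2 hn
  have hε1 : ‖(n : K)‖ ≤ 1 := IsUltrametricDist.norm_natCast_le_one K n
  refine Metric.mem_nhds_iff.2 ⟨‖(n : K)‖ ^ 2 / 2, by positivity, fun x hx => ?_⟩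
  obtain ⟨y, hy, hxy⟩ :=
    exists_one_add_pow_eq hn (t := x - 1) (by simpa [dist_eq_norm] using hx)
  refine ⟨1 + y, fun h => ?_, by rw [hxy]; ring⟩
  have : ‖y‖ = 1 := by rw [eq_neg_of_add_eq_zero_right h, norm_neg, norm_one]
  linarith

end Hensel

section Cosets

variable {K : Type} [NormedField K]

lemma mem_cosetPn_iff {c : K} (hc : c ≠ 0) {n : ℕ} {y : K} :
    y ∈ cosetPn K c n ↔ c⁻¹ * y ∈ Pn K n :=
  ⟨fun ⟨z, hz, hy⟩ => by rwa [hy, inv_mul_cancel_left₀ hc],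
    fun h => ⟨c⁻¹ * y, h, by rw [mul_inv_cancel_left₀ hc]⟩⟩

lemma mul_mem_cosetPn_mul_iff {a : K} (ha : a ≠ 0) {c y : K} {n : ℕ} :
    a * y ∈ cosetPn K (a * c) n ↔ y ∈ cosetPn K c n :=
  ⟨fun ⟨w, hw, h⟩ => ⟨w, hw, mul_left_cancel₀ ha (by rw [h, mul_assoc])⟩,
    fun ⟨w, hw, h⟩ => ⟨w, hw, by rw [h, mul_assoc]⟩⟩

lemma mul_pow_mem_cosetPn {c y a : K} {n : ℕ} (hy : y ∈ cosetPn K c n) (ha : a ≠ 0) :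
    y * a ^ n ∈ cosetPn K c n := by
  obtain ⟨_, ⟨z, hz, rfl⟩, rfl⟩ := hy
  exact ⟨(z * a) ^ n, ⟨z * a, mul_ne_zero hz ha, rfl⟩, by ring⟩

lemma cosetPn_mem_nhds [IsUltrametricDist K] [CompleteSpace K] {c : K} (hc : c ≠ 0) {n : ℕ}
    (hn : (n : K) ≠ 0) : cosetPn K c n ∈ 𝓝 c := by
  have h1 : Pn K n ∈ 𝓝 (c⁻¹ * c) := by rw [inv_mul_cancel₀ hc]; exact pn_mem_nhds_one hn
  convert (continuous_const_mul c⁻¹).continuousAt.preimage_mem_nhds h1 using 1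
  ext y
  exact mem_cosetPn_iff hc

/-- Every `x ≠ 0` is `y (π^k)^n` with `q^{-n} ≤ |y| ≤ 1`; this compact annulus is covered by
finitely many of the open cosets `c P_n`. -/
theorem PadicData.exists_finset_cosetPn_cover [IsUltrametricDist K] [ProperSpace K]
    (ctx : PadicData K) {n : ℕ} (hn : (n : K) ≠ 0) :
    ∃ C : Finset K, (∀ c ∈ C, c ≠ 0) ∧ ∀ x ≠ 0, ∃ c ∈ C, x ∈ cosetPn K c n := by
  have hq := ctx.one_lt_q_real_s15
  have hq0 : (0 : ℝ) < ctx.q := zero_lt_one.trans hq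
  set A := Metric.closedBall (0 : K) 1 \ Metric.ball 0 ((ctx.q : ℝ) ^ (-(n : ℤ)))
  have hA0 : ∀ y ∈ A, y ≠ 0 := fun y hy h0 =>
    hy.2 (by simpa [h0] using zpow_pos hq0 (-(n : ℤ)))
  obtain ⟨C, hCA, hC⟩ := (isCompact_closedBall (0 : K) 1).diff Metric.isOpen_ball
    |>.elim_nhds_subcover (fun c => cosetPn K c n) fun c hc => cosetPn_mem_nhds (hA0 c hc) hn
  refine ⟨C, fun c hc => hA0 c (hCA c hc), fun x hx => ?_⟩
  obtain ⟨π, hπ⟩ := ctx.exists_norm_eq_inv_q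
  have hπ0 : π ≠ 0 := norm_ne_zero_iff.1 (by rw [hπ]; positivity)
  have hn0 : n ≠ 0 := by rintro rfl; exact hn Nat.cast_zero
  have hr := Int.emod_nonneg (ctx.v x) (Int.natCast_ne_zero.2 hn0)
  have hrn := Int.emod_lt_of_pos (ctx.v x) (Int.natCast_pos.2 (Nat.pos_of_ne_zero hn0))
  have hπk : (π ^ (ctx.v x / n)) ^ n ≠ 0 := pow_ne_zero _ (zpow_ne_zero _ hπ0)
  have hy : ‖x / (π ^ (ctx.v x / n)) ^ n‖ = (ctx.q : ℝ) ^ (-(ctx.v x % n)) := by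
    rw [norm_div, norm_pow, norm_zpow, hπ, ctx.norm_eq x hx, inv_zpow', ← zpow_natCast,
      ← zpow_mul, ← zpow_sub₀ hq0.ne', Int.emod_def]
    ring_nf
  have hyA : x / (π ^ (ctx.v x / n)) ^ n ∈ A := by
    simp only [A, Set.mem_sdiff, mem_closedBall_zero_iff, mem_ball_zero_iff, not_lt, hy]
    exact ⟨zpow_le_one_of_nonpos₀ hq.le (by omega), zpow_le_zpow_right₀ hq.le (by omega)⟩
  obtain ⟨c, hc, hyc⟩ := Set.mem_iUnion₂.1 (hC hyA)
  refine ⟨c, hc, ?_⟩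
  simpa [div_mul_cancel₀ _ hπk] using mul_pow_mem_cosetPn hyc (zpow_ne_zero (ctx.v x / n) hπ0)

end Cosets

section Subanalytic

variable {K : Type} [NormedField K]

lemma isBasicSubanalytic_apply {m : ℕ} (i : Fin m) : IsBasicSubanalytic K (fun x => x i) := by
  simpa using IsBasicSubanalytic.ratfunc (K := K) (MvPolynomial.X i) 1

lemma isBasicSubanalytic_inv_apply {m : ℕ} (i : Fin m) :
    IsBasicSubanalytic K (fun x => (x i)⁻¹) := by
  convert IsBasicSubanalytic.ratfunc (K := K) 1 (MvPolynomial.X i) using 2 with x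
  split_ifs with h <;> simp_all

lemma isSubanalytic_empty (m : ℕ) : IsSubanalytic K (∅ : Set (Fin m → K)) :=
  ⟨0, fun _ => ∅, by simp, fun i => i.elim0⟩

namespace IsSubanalytic

lemma union {m : ℕ} {X Y : Set (Fin m → K)} (hX : IsSubanalytic K X) (hY : IsSubanalytic K Y) :
    IsSubanalytic K (X ∪ Y) := by
  obtain ⟨N₁, p₁, rfl, hp₁⟩ := hX
  obtain ⟨N₂, p₂, rfl, hp₂⟩ := hY
  refine ⟨N₁ + N₂, Fin.addCases p₁ p₂, ?_, fun i => ?_⟩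
  · rw [← finSumFinEquiv.surjective.iUnion_comp, Set.iUnion_sum]
    simp
  · induction i using Fin.addCases with
    | left i => simpa using hp₁ i
    | right i => simpa using hp₂ i

lemma biUnion {m : ℕ} {ι : Type*} (s : Finset ι) {X : ι → Set (Fin m → K)}
    (hX : ∀ i ∈ s, IsSubanalytic K (X i)) : IsSubanalytic K (⋃ i ∈ s, X i) := by
  classical
  induction s using Finset.induction_on with
  | empty => simpa using isSubanalytic_empty m
  | insert a s _ ih =>
    rw [Finset.set_biUnion_insert]
    exact (hX a (s.mem_insert_self a)).union (ih fun i hi => hX i (s.mem_insert_of_mem hi))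

lemma preimage {m m' : ℕ} {X : Set (Fin m' → K)} (hX : IsSubanalytic K X)
    {T : (Fin m → K) → Fin m' → K} (hT : ∀ i, IsBasicSubanalytic K (fun x => T x i)) :
    IsSubanalytic K (T ⁻¹' X) := by
  obtain ⟨N, piece, rfl, hpiece⟩ := hX
  refine ⟨N, fun i => T ⁻¹' piece i, Set.preimage_iUnion, fun i => ?_⟩
  obtain ⟨f, hf, k, g, e, hg, hpi⟩ := hpiece i
  exact ⟨fun x => f (T x), hf.comp hT, k, fun j x => g j (T x), e,
    fun j => ⟨(hg j).1.comp hT, (hg j).2⟩, by simp only [hpi]; rfl⟩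

lemma inter_pn {m : ℕ} {X : Set (Fin m → K)} (hX : IsSubanalytic K X)
    {F : (Fin m → K) → K} (hF : IsBasicSubanalytic K F) {n : ℕ} (hn : 0 < n) :
    IsSubanalytic K (X ∩ {x | F x ∈ Pn K n}) := by
  obtain ⟨N, piece, rfl, hpiece⟩ := hX
  refine ⟨N, fun i => piece i ∩ {x | F x ∈ Pn K n}, Set.iUnion_inter _ _, fun i => ?_⟩
  obtain ⟨f, hf, k, g, e, hg, hpi⟩ := hpiece i
  refine ⟨f, hf, k + 1, Fin.snoc g F, Fin.snoc e n, fun j => ?_, ?_⟩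
  · induction j using Fin.lastCases with
    | last => simpa using ⟨hF, hn⟩
    | cast j => simpa using hg j
  · ext x
    simp only [hpi, Set.mem_inter_iff, Set.mem_ofPred_eq, Fin.forall_fin_succ', Fin.snoc_castSucc,
      Fin.snoc_last, and_assoc]

lemma inter_cosetPn {m : ℕ} {X : Set (Fin m → K)} (hX : IsSubanalytic K X)
    {F : (Fin m → K) → K} (hF : IsBasicSubanalytic K F) {n : ℕ} (hn : 0 < n) {c : K}
    (hc : c ≠ 0) : IsSubanalytic K (X ∩ {x | F x ∈ cosetPn K c n}) := by
  simp_rw [mem_cosetPn_iff hc]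
  exact hX.inter_pn ((IsBasicSubanalytic.const _).mul hF) hn

end IsSubanalytic

lemma isSubanalyticFun_iff {m : ℕ} (f : (Fin m → K) → K) :
    IsSubanalyticFun K f ↔
      IsSubanalytic K {y : Fin (m + 1) → K | y (Fin.last m) = f (Fin.init y)} := by
  simp [IsSubanalyticFun, IsSubanalyticFunOn]

namespace IsSubanalyticFun

/-- The graph of `e ∘ f` is the preimage of the graph of `f` under `(x, t) ↦ (x, e⁻¹ t)`. -/
lemma equiv_comp {m : ℕ} {f : (Fin m → K) → K} (hf : IsSubanalyticFun K f) (e : K ≃ K)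
    (he : IsBasicSubanalytic K (fun t : Fin 1 → K => e.symm (t 0))) :
    IsSubanalyticFun K (fun x => e (f x)) := by
  rw [isSubanalyticFun_iff] at hf ⊢
  have hT : ∀ i, IsBasicSubanalytic K
      (fun z : Fin (m + 1) → K => Fin.snoc (α := fun _ => K) (Fin.init z)
        (e.symm (z (Fin.last m))) i) := by
    intro i
    induction i using Fin.lastCases with
    | last => simpa using he.comp fun _ => isBasicSubanalytic_apply (Fin.last m)
    | cast j => simpa [Fin.init] using isBasicSubanalytic_apply (K := K) j.castSucc
  convert hf.preimage hT using 1
  ext z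
  simp [Equiv.symm_apply_eq]

lemma const_mul {m : ℕ} {f : (Fin m → K) → K} (hf : IsSubanalyticFun K f) {c : K}
    (hc : c ≠ 0) :
    IsSubanalyticFun K (fun x => c * f x) :=
  hf.equiv_comp (Equiv.mulLeft₀ c hc)
    (by simpa using (IsBasicSubanalytic.const c⁻¹).mul (isBasicSubanalytic_apply (K := K) 0))

lemma inv {m : ℕ} {f : (Fin m → K) → K} (hf : IsSubanalyticFun K f) :
    IsSubanalyticFun K (fun x => (f x)⁻¹) :=
  hf.equiv_comp (Equiv.inv K) (isBasicSubanalytic_inv_apply 0)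

/-- The graph of `d(f) f` is the union over `c ∈ C` of the graphs of `d(c) f` cut by
`t ∈ d(c) c P_n`. -/
lemma mul_comp_of_cosetPn_cover {m : ℕ} {f : (Fin m → K) → K} (hf : IsSubanalyticFun K f)
    (hf0 : ∀ x, f x ≠ 0) {n : ℕ} (hn : 0 < n) {C : Finset K} (hC0 : ∀ c ∈ C, c ≠ 0)
    (hC : ∀ y ≠ 0, ∃ c ∈ C, y ∈ cosetPn K c n) {d : K → K} (hd0 : ∀ y, d y ≠ 0)
    (hd : ∀ c ∈ C, ∀ y ∈ cosetPn K c n, d y = d c) :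
    IsSubanalyticFun K (fun x => d (f x) * f x) := by
  have hgraph : {z : Fin (m + 1) → K | z (Fin.last m) = d (f (Fin.init z)) * f (Fin.init z)} =
      ⋃ c ∈ C, {z : Fin (m + 1) → K | z (Fin.last m) = d c * f (Fin.init z)} ∩
        {z | z (Fin.last m) ∈ cosetPn K (d c * c) n} := by
    ext z
    simp only [Set.mem_ofPred_eq, Set.mem_iUnion, Set.mem_inter_iff, exists_prop]
    constructor
    · intro hz
      obtain ⟨c, hc, hyc⟩ := hC _ (hf0 (Fin.init z))
      rw [hd c hc _ hyc] at hz
      exact ⟨c, hc, hz, by rwa [hz, mul_mem_cosetPn_mul_iff (hd0 c)]⟩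
    · rintro ⟨c, hc, hz, hzc⟩
      rw [hz, mul_mem_cosetPn_mul_iff (hd0 c)] at hzc
      rwa [hd c hc _ hzc]
  rw [isSubanalyticFun_iff, hgraph]
  exact IsSubanalytic.biUnion C fun c hc =>
    ((isSubanalyticFun_iff _).1 (hf.const_mul (hd0 c))).inter_cosetPn
      (isBasicSubanalytic_apply _) hn (mul_ne_zero (hd0 c) (hC0 c hc))

end IsSubanalyticFun

end Subanalytic

theorem memOmegaAn_ite_v_modEq {K : Type} [NormedField K] [IsUltrametricDist K] [ProperSpace K]
    (ctx : PadicData K) {m : ℕ} {α : (Fin m → K) → K} (hα : IsSubanalyticFun K α)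
    (hα0 : ∀ x, α x ≠ 0) {n : ℕ} (hn : (n : K) ≠ 0) (b : ℤ) :
    MemOmegaAn K ctx.v ctx.q (fun x => if ctx.v (α x) ≡ b [ZMOD n] then (1 : ℚ) else 0) := by
  obtain ⟨π, hπ⟩ := ctx.exists_norm_eq_inv_q
  have hq := ctx.one_lt_q_real_s15
  have hπ0 : π ≠ 0 := norm_ne_zero_iff.1 (by rw [hπ]; positivity)
  obtain ⟨C, hC0, hC⟩ := ctx.exists_finset_cosetPn_cover hn
  set d : K → K := fun y => if ctx.v y ≡ b [ZMOD n] then 1 else π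
  have hk : IsSubanalyticFun K (fun x => d (α x) * α x) := by
    have hn0 : 0 < n := Nat.pos_of_ne_zero (by rintro rfl; exact hn Nat.cast_zero)
    refine hα.mul_comp_of_cosetPn_cover hα0 hn0 hC0 hC
      (fun y => by unfold d; split_ifs <;> simp [hπ0]) fun c hc y hy => ?_
    have h := ctx.v_modEq_of_mem_cosetPn_s15 (hC0 c hc) hy
    exact if_congr ⟨h.symm.trans, h.trans⟩ rfl rfl
  have key : ∀ x, (if ctx.v (α x) ≡ b [ZMOD n] then (1 : ℚ) else 0) =
      ctx.q / (ctx.q - 1) * (ctx.normQ (d (α x) * α x) * ctx.normQ (α x)⁻¹) +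
        -1 / (ctx.q - 1) := by
    intro x
    apply Rat.cast_injective (α := ℝ)
    have hq1 : (ctx.q : ℝ) - 1 ≠ 0 := by linarith
    push_cast
    rw [ctx.cast_normQ, ctx.cast_normQ, norm_mul, norm_inv,
      mul_inv_cancel_right₀ (norm_ne_zero_iff.2 (hα0 x))]
    unfold d
    split_ifs
    · rw [norm_one]; field_simp; ring
    · rw [hπ]; field_simp; ring
  rw [funext key]
  exact ((MemOmegaAn.const _).mul ((memOmegaAn_normQ ctx hk).mul
    (memOmegaAn_normQ ctx hα.inv))).add (MemOmegaAn.const _)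

theorem statement15 {p : ℕ} [Fact p.Prime] (K : Type) [NormedField K]
    [Algebra ℚ_[p] K] [FiniteDimensional ℚ_[p] K]
    (hcont : Continuous (algebraMap ℚ_[p] K)) (ctx : PadicData K)
    (m : ℕ) (α β : (Fin m → K) → K)
    (hα0 : ∀ x, α x ≠ 0) (hβ0 : ∀ x, β x ≠ 0)
    (hα : IsSubanalyticFun K α) (hβ : IsSubanalyticFun K β)
    (n : ℕ) (hn : 0 < n) (a₁ a₂ : ℤ) :
    MemOmegaAn K ctx.v ctx.q (fun lam =>
      if ctx.v (α lam) ≡ a₁ [ZMOD (n : ℤ)] ∧ ctx.v (β lam) ≡ a₂ [ZMOD (n : ℤ)]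
      then (1 : ℚ) else 0) := by
  have : CharZero K := charZero_of_injective_algebraMap (algebraMap ℚ_[p] K).injective
  have := isUltrametricDist_of_continuous_algebraMap hcont
  have := properSpace_of_continuous_algebraMap hcont ctx.exists_one_lt_norm
  have hn' : (n : K) ≠ 0 := Nat.cast_ne_zero.2 hn.ne'
  simpa only [ite_zero_mul_ite_zero, mul_one] using
    (memOmegaAn_ite_v_modEq ctx hα hα0 hn' a₁).mul
      (memOmegaAn_ite_v_modEq ctx hβ hβ0 hn' a₂)

end PadicCell
end
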